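/- arXiv:1011.5034 — 3 statements merged into one kernel-verified Lean document; each statement's English description precedes it below -/
import Mathlib

section
/- Let K ≥ 0 and L ≥ 0 be integers, let α_0 > α_1 > ... > α_K be real numbers, and let a_{k,l} ∈ ℂ for 0 ≤ k ≤ K, 0 ≤ l ≤ L. Suppose there is l_0 with 0 ≤ l_0 ≤ L such that a_{0,l_0} ≠ 0 and a_{0,l} = 0 for all l > l_0. Define f : (1,∞) → ℂ by f(x) = Σ_{k=0}^K Σ_{l=0}^L a_{k,l} · x^{α_k} · (ln x)^l. Then there exist M ≥ 0 and x_0 > 1 such that for all x ≥ x_0 one has f(x) ≠ 0 and |f'(x)/f(x) − α_0/x − l_0/(x·ln x)| ≤ M / (x·(ln x)^2). -/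
/-!
Each term `x ^ β * log x ^ l` has logarithmic derivative exactly `β / x + l / (x log x)`, so
`x (log x)² (f' - (α₀ / x + l₀ / (x log x)) f)` is again a sum of such terms, namely
`Σ a_{k,l} ((α_k - α₀) x^{α_k} (log x)^{l+2} + (l - l₀) x^{α_k} (log x)^{l+1})`.
The growth of `x ^ β * log x ^ m` is ordered lexicographically in `(β, m)`, and `(α₀, l₀)` is the
largest index carrying a nonzero coefficient. Hence `f ~ a_{0,l₀} x^{α₀} (log x)^{l₀}`, while the
coefficients `α_k - α₀` and `l - l₀` vanish exactly where the shifted log powers would exceed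
`(α₀, l₀)`, so the sum above is `O(x^{α₀} (log x)^{l₀}) = O(f)`. Dividing by `x (log x)² f` gives
the bound.
-/

open Finset Filter Asymptotics Real Topology

section RpowLogPow

variable {β γ : ℝ} {m n : ℕ}

lemma one_isBigO_log_pow (n : ℕ) : (fun _ : ℝ => (1 : ℝ)) =O[atTop] fun x => log x ^ n :=
  IsBigO.of_bound 1 <| (tendsto_log_atTop.eventually_ge_atTop 1).mono fun x hx => by
    simpa [abs_of_nonneg (zero_le_one.trans hx)] using one_le_pow₀ hx

lemma isLittleO_rpow_mul_log_pow (h : toLex (β, m) < toLex (γ, n)) :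
    (fun x : ℝ => x ^ β * log x ^ m) =o[atTop] fun x => x ^ γ * log x ^ n := by
  rcases Prod.Lex.toLex_lt_toLex.1 h with hβγ | ⟨rfl, hmn⟩
  · have hlog : (fun x : ℝ => log x ^ m) =o[atTop] fun x => x ^ (γ - β) := by
      simpa only [rpow_natCast] using isLittleO_log_rpow_rpow_atTop (m : ℝ) (sub_pos.2 hβγ)
    have hrpow : (fun x : ℝ => x ^ β * x ^ (γ - β)) =ᶠ[atTop] fun x => x ^ γ * 1 := by
      filter_upwards [eventually_gt_atTop 0] with x hx
      rw [← rpow_add hx, add_sub_cancel, mul_one]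
    exact (((isBigO_refl _ _).mul_isLittleO hlog).trans_eventuallyEq hrpow).trans_isBigO
      ((isBigO_refl _ _).mul (one_isBigO_log_pow n))
  · exact (isBigO_refl _ _).mul_isLittleO
      ((isLittleO_pow_pow_atTop_of_lt hmn).comp_tendsto tendsto_log_atTop)

lemma isLittleO_const_mul_rpow_mul_log_pow {c : ℂ} (h : c = 0 ∨ toLex (β, m) < toLex (γ, n)) :
    (fun x : ℝ => c * ((x ^ β * log x ^ m : ℝ) : ℂ)) =o[atTop] fun x => x ^ γ * log x ^ n := by
  rcases h with rfl | h
  · simpa only [zero_mul] using isLittleO_zero _ _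
  · refine IsLittleO.const_mul_left ?_ c
    rw [← isLittleO_norm_left]
    simpa only [Complex.norm_real] using (isLittleO_rpow_mul_log_pow h).norm_left

lemma isBigO_const_mul_rpow_mul_log_pow {c : ℂ} (h : c = 0 ∨ toLex (β, m) ≤ toLex (γ, n)) :
    (fun x : ℝ => c * ((x ^ β * log x ^ m : ℝ) : ℂ)) =O[atTop] fun x => x ^ γ * log x ^ n := by
  rcases h with h | h
  · exact (isLittleO_const_mul_rpow_mul_log_pow (.inl h)).isBigO
  rcases h.lt_or_eq with h | h
  · exact (isLittleO_const_mul_rpow_mul_log_pow (.inr h)).isBigO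
  · obtain ⟨rfl, rfl⟩ := Prod.mk.inj (toLex.injective h)
    refine IsBigO.const_mul_left ?_ c
    rw [← isBigO_norm_left]
    simpa only [Complex.norm_real] using (isBigO_refl _ _).norm_left

end RpowLogPow

lemma hasDerivAt_rpow_mul_log_pow (β : ℝ) (l : ℕ) {x : ℝ} (hx : 1 < x) :
    HasDerivAt (fun y => y ^ β * log y ^ l) (x ^ β * log x ^ l * (β / x + l / (x * log x))) x := by
  have hx0 : x ≠ 0 := by positivity
  have hlog : log x ≠ 0 := (log_pos hx).ne'
  refine ((hasDerivAt_rpow_const (p := β) (Or.inl hx0)).mul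
    ((hasDerivAt_log hx0).pow l)).congr_deriv ?_
  rw [rpow_sub_one hx0]
  rcases l with _ | l
  · simp only [pow_zero, Pi.one_apply, mul_one, CharP.cast_eq_zero, zero_tsub, zero_mul, mul_zero,
      add_zero, zero_div]
    field_simp
  · simp only [Pi.pow_apply, pow_succ, Nat.cast_add, Nat.cast_one, add_tsub_cancel_right]
    field_simp

lemma isBigO_of_sub_const_mul_isLittleO {ι : Type*} {l : Filter ι} {u : ι → ℂ} {v : ι → ℝ} {c : ℂ}
    (hc : c ≠ 0) (h : (fun x => u x - c * v x) =o[l] v) : v =O[l] u := by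
  have hc' : 0 < ‖c‖ := norm_pos_iff.2 hc
  refine IsBigO.of_bound (2 / ‖c‖) ?_
  filter_upwards [h.def (half_pos hc')] with x hx
  have hcv : ‖c‖ * ‖v x‖ ≤ ‖u x‖ + ‖u x - c * v x‖ := by
    simpa only [norm_mul, Complex.norm_real, sub_sub_cancel] using norm_sub_le (u x) (u x - c * v x)
  rw [div_mul_eq_mul_div, le_div_iff₀ hc']
  linarith

noncomputable def powLogSum (K L : ℕ) (α : ℕ → ℝ) (c : ℕ → ℕ → ℂ) (x : ℝ) : ℂ :=
  ∑ k ∈ range (K + 1), ∑ l ∈ range (L + 1), c k l * ((x ^ α k * log x ^ l : ℝ) : ℂ)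

noncomputable def powLogRemainder (K L : ℕ) (α : ℕ → ℝ) (c : ℕ → ℕ → ℂ) (β : ℝ) (n : ℕ)
    (x : ℝ) : ℂ :=
  ∑ k ∈ range (K + 1), ∑ l ∈ range (L + 1),
    (c k l * (α k - β) * ((x ^ α k * log x ^ (l + 2) : ℝ) : ℂ) +
      c k l * (l - n) * ((x ^ α k * log x ^ (l + 1) : ℝ) : ℂ))

section PowLogSum

variable {K L : ℕ} {α : ℕ → ℝ} {c : ℕ → ℕ → ℂ}

lemma hasDerivAt_powLogSum {x : ℝ} (hx : 1 < x) :
    HasDerivAt (powLogSum K L α c) (∑ k ∈ range (K + 1), ∑ l ∈ range (L + 1),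
      c k l * ((x ^ α k * log x ^ l * (α k / x + l / (x * log x)) : ℝ) : ℂ)) x :=
  HasDerivAt.fun_sum fun k _ => HasDerivAt.fun_sum fun l _ =>
    (hasDerivAt_rpow_mul_log_pow (α k) l hx).ofReal_comp.const_mul (c k l)

lemma mul_deriv_powLogSum {x : ℝ} (hx : 1 < x) (β : ℝ) (n : ℕ) :
    (x * log x ^ 2 : ℂ) * deriv (powLogSum K L α c) x =
      powLogRemainder K L α c β n x + (β * log x ^ 2 + n * log x) * powLogSum K L α c x := by
  have hx0 : (x : ℂ) ≠ 0 := by exact_mod_cast (zero_lt_one.trans hx).ne'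
  have hlog : (log x : ℂ) ≠ 0 := by exact_mod_cast (log_pos hx).ne'
  rw [(hasDerivAt_powLogSum hx).deriv, powLogRemainder, powLogSum, mul_sum, mul_sum,
    ← sum_add_distrib]
  refine sum_congr rfl fun k _ => ?_
  rw [mul_sum, mul_sum, ← sum_add_distrib]
  refine sum_congr rfl fun l _ => ?_
  push_cast
  field_simp
  ring

lemma deriv_div_powLogSum_sub {x : ℝ} (hx : 1 < x) (hS : powLogSum K L α c x ≠ 0) (β : ℝ)
    (n : ℕ) :
    deriv (powLogSum K L α c) x / powLogSum K L α c x - (β : ℂ) / x - (n : ℂ) / (x * log x) =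
      powLogRemainder K L α c β n x / (powLogSum K L α c x * x * log x ^ 2) := by
  have hx0 : (x : ℂ) ≠ 0 := by exact_mod_cast (zero_lt_one.trans hx).ne'
  have hlog : (log x : ℂ) ≠ 0 := by exact_mod_cast (log_pos hx).ne'
  field_simp
  linear_combination mul_deriv_powLogSum (K := K) (L := L) (α := α) (c := c) hx β n

lemma isLittleO_powLogSum {γ : ℝ} {n : ℕ}
    (h : ∀ k ≤ K, ∀ l ≤ L, c k l = 0 ∨ toLex (α k, l) < toLex (γ, n)) :
    powLogSum K L α c =o[atTop] fun x => x ^ γ * log x ^ n :=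
  IsLittleO.fun_sum fun k hk => IsLittleO.fun_sum fun l hl =>
    isLittleO_const_mul_rpow_mul_log_pow
      (h k (Nat.lt_succ_iff.1 (mem_range.1 hk)) l (Nat.lt_succ_iff.1 (mem_range.1 hl)))

end PowLogSum

section LeadingTerm

variable {K L : ℕ} {α : ℕ → ℝ} {a : ℕ → ℕ → ℂ} {l₀ : ℕ}

lemma eq_zero_or_eq_leading_or_toLex_lt (hα : ∀ k, k < K → α (k + 1) < α k)
    (ha' : ∀ l, l₀ < l → l ≤ L → a 0 l = 0) {k l : ℕ} (hk : k ≤ K) (hl : l ≤ L) :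
    a k l = 0 ∨ (k, l) = (0, l₀) ∨ toLex (α k, l) < toLex (α 0, l₀) := by
  rcases Nat.eq_zero_or_pos k with rfl | hk0
  · rcases lt_trichotomy l l₀ with h | rfl | h
    · exact .inr (.inr (Prod.Lex.toLex_lt_toLex.2 (.inr ⟨rfl, h⟩)))
    · exact .inr (.inl rfl)
    · exact .inl (ha' l h hl)
  · exact .inr (.inr (Prod.Lex.toLex_lt_toLex.2
      (.inl (strictAntiOn_Iic_of_succ_lt hα (Nat.zero_le K) hk hk0))))

lemma isLittleO_powLogSum_sub_leading (hα : ∀ k, k < K → α (k + 1) < α k) (hl₀ : l₀ ≤ L)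
    (ha' : ∀ l, l₀ < l → l ≤ L → a 0 l = 0) :
    (fun x => powLogSum K L α a x - a 0 l₀ * ((x ^ α 0 * log x ^ l₀ : ℝ) : ℂ)) =o[atTop]
      fun x => x ^ α 0 * log x ^ l₀ := by
  have hsub : ∀ x, powLogSum K L α a x - a 0 l₀ * ((x ^ α 0 * log x ^ l₀ : ℝ) : ℂ) =
      powLogSum K L α (fun k l => if k = 0 ∧ l = l₀ then 0 else a k l) x := by
    intro x
    have hterm : ∀ k l, (if k = 0 ∧ l = l₀ then 0 else a k l) * ((x ^ α k * log x ^ l : ℝ) : ℂ) =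
        a k l * ((x ^ α k * log x ^ l : ℝ) : ℂ) -
          if k = 0 ∧ l = l₀ then a 0 l₀ * ((x ^ α 0 * log x ^ l₀ : ℝ) : ℂ) else 0 := by
      intro k l
      split_ifs with h
      · obtain ⟨rfl, rfl⟩ := h
        ring
      · ring
    simp only [powLogSum, hterm, sum_sub_distrib]
    rw [sum_eq_single_of_mem 0 (by simp) fun k _ hk => sum_eq_zero fun l _ => if_neg (by tauto),
      sum_eq_single_of_mem l₀ (by simpa [Nat.lt_succ_iff] using hl₀) fun l _ hl => if_neg (by tauto),
      if_pos ⟨rfl, rfl⟩]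
  simp only [hsub]
  refine isLittleO_powLogSum fun k hk l hl => ?_
  rcases eq_zero_or_eq_leading_or_toLex_lt hα ha' hk hl with h | h | h
  · exact .inl (by simp [h])
  · exact .inl (by simp_all)
  · exact .inr h

lemma isBigO_powLogRemainder (hα : ∀ k, k < K → α (k + 1) < α k)
    (ha' : ∀ l, l₀ < l → l ≤ L → a 0 l = 0) :
    powLogRemainder K L α a (α 0) l₀ =O[atTop] fun x => x ^ α 0 * log x ^ l₀ := by
  refine IsBigO.fun_sum fun k hk => IsBigO.fun_sum fun l hl => ?_
  have hkl := eq_zero_or_eq_leading_or_toLex_lt hα ha' (Nat.lt_succ_iff.1 (mem_range.1 hk))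
    (Nat.lt_succ_iff.1 (mem_range.1 hl))
  refine (isBigO_const_mul_rpow_mul_log_pow ?_).add (isBigO_const_mul_rpow_mul_log_pow ?_)
  · rcases hkl with h | h | h
    · exact .inl (by simp [h])
    · exact .inl (by simp_all)
    · by_cases hαk : α k = α 0
      · exact .inl (by simp [hαk])
      · have hlt : α k < α 0 := (Prod.Lex.toLex_lt_toLex.1 h).resolve_right (hαk ·.1)
        exact .inr (Prod.Lex.toLex_le_toLex.2 (.inl hlt))
  · rcases hkl with h | h | h
    · exact .inl (by simp [h])
    · exact .inl (by simp_all)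
    · exact .inr (Prod.Lex.toLex_le_toLex.2
        ((Prod.Lex.toLex_lt_toLex.1 h).imp_right (And.imp_right Nat.succ_le_of_lt)))

end LeadingTerm

/-- General case: for `f(x) = Σ_{k=0}^K Σ_{l=0}^L a_{k,l} x^{α_k} (ln x)^l` with
`α_0 > α_1 > ⋯ > α_K`, and `l₀ ≤ L` the largest index with `a_{0,l₀} ≠ 0` among the
leading terms, there are `M ≥ 0` and `x₀ > 1` such that for all `x ≥ x₀` one has
`f(x) ≠ 0` and `|f'(x)/f(x) − α_0/x − l₀/(x ln x)| ≤ M/(x (ln x)²)`. -/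
theorem logDeriv_sum_rpow_log_asymptotic
    (K L : ℕ) (α : ℕ → ℝ) (hα : ∀ k, k < K → α (k + 1) < α k)
    (a : ℕ → ℕ → ℂ) (l₀ : ℕ) (hl₀ : l₀ ≤ L) (ha : a 0 l₀ ≠ 0)
    (ha' : ∀ l, l₀ < l → l ≤ L → a 0 l = 0)
    (f : ℝ → ℂ)
    (hf : ∀ x : ℝ, 1 < x →
      f x = ∑ k ∈ Finset.range (K + 1), ∑ l ∈ Finset.range (L + 1),
        a k l * ((x ^ α k : ℝ) : ℂ) * ((Real.log x : ℂ)) ^ l) :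
    ∃ M : ℝ, 0 ≤ M ∧ ∃ x₀ : ℝ, 1 < x₀ ∧ ∀ x : ℝ, x₀ ≤ x →
      f x ≠ 0 ∧
      ‖deriv f x / f x - (α 0 : ℂ) / (x : ℂ) -
          (l₀ : ℂ) / ((x : ℂ) * (Real.log x : ℂ))‖ ≤
        M / (x * (Real.log x) ^ 2) := by
  have hfS : ∀ x : ℝ, 1 < x → f x = powLogSum K L α a x := fun x hx => by
    simp only [hf x hx, powLogSum, Complex.ofReal_mul, Complex.ofReal_pow, mul_assoc]
  have hPS : (fun x => x ^ α 0 * log x ^ l₀) =O[atTop] powLogSum K L α a :=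
    isBigO_of_sub_const_mul_isLittleO ha (isLittleO_powLogSum_sub_leading hα hl₀ ha')
  obtain ⟨M, hM, hRS⟩ := ((isBigO_powLogRemainder hα ha').trans hPS).exists_pos
  have hSne : ∀ᶠ x in atTop, powLogSum K L α a x ≠ 0 := by
    filter_upwards [hPS.eq_zero_imp, eventually_gt_atTop 1] with x hP hx hS
    exact (mul_pos (rpow_pos_of_pos (zero_lt_one.trans hx) _) (pow_pos (log_pos hx) _)).ne' (hP hS)
  obtain ⟨x₀, hx₀⟩ := eventually_atTop.1 (hRS.bound.and hSne)
  refine ⟨M, hM.le, max x₀ 2, one_lt_two.trans_le (le_max_right _ _), fun x hx => ?_⟩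
  have hx1 : 1 < x := one_lt_two.trans_le ((le_max_right _ _).trans hx)
  obtain ⟨hRx, hSx⟩ := hx₀ x ((le_max_left _ _).trans hx)
  have hderiv : deriv f x = deriv (powLogSum K L α a) x :=
    EventuallyEq.deriv_eq (eventually_gt_nhds hx1 |>.mono hfS)
  refine ⟨hfS x hx1 ▸ hSx, ?_⟩
  rw [hderiv, hfS x hx1, deriv_div_powLogSum_sub hx1 hSx, norm_div, mul_assoc, norm_mul,
    ← div_div]
  have hD : ‖((x : ℂ) * (log x : ℂ) ^ 2)‖ = x * log x ^ 2 := by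
    simp [abs_of_pos (zero_lt_one.trans hx1)]
  rw [hD]
  gcongr
  exact div_le_of_le_mul₀ (norm_nonneg _) hM.le hRx
end

section
/- Let C > 0, 0 ≤ r < 1, K ≥ 0, let λ̃ ∈ ℂ with |λ̃| ≤ r·C, and let g : (−∞,−C] → ℂ be measurable with |g(λ)| ≤ K/|λ| for all λ ≤ −C. For s ∈ ℂ with Re(s) > −1 define F(s) := ∫_{−∞}^{−C} |λ|^{−s} · g(λ) · ((1 − λ̃/λ)^{−s} − 1) dλ, where |λ|^{−s} = exp(−s·ln|λ|) and (1 − λ̃/λ)^{−s} is the principal branch of the complex power (well defined since |λ̃/λ| ≤ r < 1). Then the integrand is absolutely integrable for every s with Re(s) > −1, F is holomorphic on the half-plane {s ∈ ℂ : Re(s) > −1}, and F(0) = 0. -/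
/-!
For `λ ≤ -C` we have `‖λ̃/λ‖ ≤ r C/|λ| ≤ r < 1`, hence `‖log (1 - λ̃/λ)‖ ≤ ρ C/|λ|` with
`ρ = r/(1-r)`, and `‖exp z - 1‖ ≤ ‖z‖ e^‖z‖` gives
`‖(1 - λ̃/λ)^(-s) - 1‖ ≤ ‖s‖ ρ (C/|λ|) e^(‖s‖ρ)`. Together with `‖g λ‖ ≤ K/|λ|` the integrand is
`O(|λ|^(-Re s - 2))`, locally uniformly in `s`, which is integrable on `(-∞, -C]` exactly when
`Re s > -1`. The integrand is entire in `s`, so the integral is holomorphic by dominated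
differentiation under the integral sign; at `s = 0` the integrand vanishes identically.
-/
open MeasureTheory Complex Set Metric Filter Topology

theorem Complex.norm_exp_sub_one_le_mul_exp (z : ℂ) : ‖exp z - 1‖ ≤ ‖z‖ * Real.exp ‖z‖ := by
  simpa using norm_exp_sub_sum_le_norm_mul_exp z 1

theorem Complex.norm_log_one_sub_le {w : ℂ} (hw : ‖w‖ < 1) :
    ‖log (1 - w)‖ ≤ ‖w‖ / (1 - ‖w‖) := by
  have h := norm_log_one_add_le (z := -w) (by rwa [norm_neg])
  rw [norm_neg, ← sub_eq_add_neg] at h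
  have h1 : 0 < 1 - ‖w‖ := by linarith
  calc ‖log (1 - w)‖ ≤ ‖w‖ ^ 2 * (1 - ‖w‖)⁻¹ / 2 + ‖w‖ := h
    _ = (‖w‖ - ‖w‖ ^ 2 / 2) / (1 - ‖w‖) := by field_simp; ring
    _ ≤ ‖w‖ / (1 - ‖w‖) := by gcongr; nlinarith [sq_nonneg ‖w‖]

theorem Real.rpow_le_rpow_add_rpow {x a b t : ℝ} (hx : 0 < x) (ha : a ≤ t) (hb : t ≤ b) :
    x ^ t ≤ x ^ a + x ^ b := by
  rcases le_total 1 x with h1 | h1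
  · exact (rpow_le_rpow_of_exponent_le h1 hb).trans (le_add_of_nonneg_left (by positivity))
  · exact (rpow_le_rpow_of_exponent_ge hx h1 ha).trans (le_add_of_nonneg_right (by positivity))

theorem integrableOn_Iic_abs_rpow {C p : ℝ} (hC : 0 < C) (hp : p < -1) :
    IntegrableOn (fun l : ℝ => |l| ^ p) (Iic (-C)) := by
  have h : IntegrableOn (fun t : ℝ => t ^ p) (Ici C) :=
    (integrableOn_Ici_iff_integrableOn_Ioi (by simp)).2 (integrableOn_Ioi_rpow_of_lt hp hC)
  rw [← (Measure.measurePreserving_neg (volume : Measure ℝ)).integrableOn_comp_preimage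
    (Homeomorph.neg ℝ).measurableEmbedding] at h
  refine (integrableOn_congr_fun (fun l hl => ?_) measurableSet_Iic).1 (by simpa using h)
  simp only [Function.comp_apply, mem_Iic] at hl ⊢
  rw [abs_of_neg (by linarith)]

section ParametricIntegral

variable {α E : Type*} [MeasurableSpace α] {μ : Measure α} [NormedAddCommGroup E]

theorem aestronglyMeasurable_deriv_of_ae_differentiableAt {𝕜 : Type*} [NontriviallyNormedField 𝕜]
    [NormedSpace 𝕜 E] {F : 𝕜 → α → E} {x₀ : 𝕜}
    (hF_meas : ∀ x, AEStronglyMeasurable (F x) μ)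
    (hF_diff : ∀ᵐ a ∂μ, DifferentiableAt 𝕜 (F · a) x₀) :
    AEStronglyMeasurable (fun a => deriv (F · a) x₀) μ :=
  aestronglyMeasurable_of_tendsto_ae (𝓝[≠] x₀)
    (fun x => ((hF_meas x).sub (hF_meas x₀)).const_smul (x - x₀)⁻¹)
    (hF_diff.mono fun _ ha => ha.hasDerivAt.tendsto_slope)

variable [NormedSpace ℂ E]

theorem hasDerivAt_integral_of_dominated_of_differentiableOn {F : ℂ → α → E} {s₀ : ℂ} {ε : ℝ}
    {bound : α → ℝ} (hε : 0 < ε) (hF_meas : ∀ s, AEStronglyMeasurable (F s) μ)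
    (hF_diff : ∀ᵐ a ∂μ, DifferentiableOn ℂ (F · a) (ball s₀ ε))
    (h_bound : ∀ᵐ a ∂μ, ∀ s ∈ ball s₀ ε, ‖F s a‖ ≤ bound a)
    (bound_integrable : Integrable bound μ) :
    HasDerivAt (fun s => ∫ a, F s a ∂μ) (∫ a, deriv (F · a) s₀ ∂μ) s₀ := by
  have hF_int : Integrable (F s₀) μ :=
    bound_integrable.mono' (hF_meas s₀) (h_bound.mono fun _ ha => ha s₀ (mem_ball_self hε))
  have hsub {s} (hs : s ∈ ball s₀ (ε / 2)) : closedBall s (ε / 4) ⊆ ball s₀ ε :=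
    closedBall_subset_ball' (by rw [mem_ball] at hs; linarith)
  -- Cauchy's estimate on circles of radius `ε / 4` turns the bound on `F` into one on `deriv F`.
  have h_bound' : ∀ᵐ a ∂μ, ∀ s ∈ ball s₀ (ε / 2), ‖deriv (F · a) s‖ ≤ bound a / (ε / 4) := by
    filter_upwards [hF_diff, h_bound] with a hda hba s hs
    exact norm_deriv_le_of_forall_mem_sphere_norm_le (by positivity)
      (hda.diffContOnCl_ball (hsub hs)) fun z hz => hba z (hsub hs (sphere_subset_closedBall hz))
  have h_diff : ∀ᵐ a ∂μ, ∀ s ∈ ball s₀ (ε / 2), HasDerivAt (F · a) (deriv (F · a) s) s := by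
    filter_upwards [hF_diff] with a hda s hs
    exact (hda.differentiableAt (isOpen_ball.mem_nhds
      (ball_subset_ball (by linarith) hs))).hasDerivAt
  refine (hasDerivAt_integral_of_dominated_loc_of_deriv_le (ball_mem_nhds s₀ (half_pos hε))
    (Eventually.of_forall hF_meas) hF_int ?_ h_bound' (bound_integrable.div_const _) h_diff).2
  exact aestronglyMeasurable_deriv_of_ae_differentiableAt hF_meas
    (h_diff.mono fun _ ha => (ha s₀ (mem_ball_self (half_pos hε))).differentiableAt)

end ParametricIntegral

noncomputable def remainderIntegrand (lam : ℂ) (g : ℝ → ℂ) (s : ℂ) (l : ℝ) : ℂ :=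
  exp (-s * (Real.log |l| : ℂ)) * g l * ((1 - lam / (l : ℂ)) ^ (-s) - 1)

theorem div_abs_le_one_of_le_neg {C l : ℝ} (hC : 0 < C) (hl : l ≤ -C) : C / |l| ≤ 1 :=
  div_le_one_of_le₀ (by rw [abs_of_neg (by linarith)]; linarith) (abs_nonneg l)

section Remainder

variable {C r K : ℝ} {lam : ℂ} {g : ℝ → ℂ}

theorem norm_div_ofReal_le (hlam : ‖lam‖ ≤ r * C) (l : ℝ) : ‖lam / l‖ ≤ r * (C / |l|) := by
  rw [norm_div, norm_real, Real.norm_eq_abs, ← mul_div_assoc]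
  gcongr

theorem norm_div_ofReal_lt_one (hC : 0 < C) (hr0 : 0 ≤ r) (hr1 : r < 1) (hlam : ‖lam‖ ≤ r * C)
    {l : ℝ} (hl : l ≤ -C) : ‖lam / l‖ < 1 :=
  (norm_div_ofReal_le hlam l).trans_lt
    ((mul_le_of_le_one_right hr0 (div_abs_le_one_of_le_neg hC hl)).trans_lt hr1)

theorem measurable_remainderIntegrand (hg : Measurable g) (s : ℂ) :
    Measurable (remainderIntegrand lam g s) := by
  unfold remainderIntegrand
  fun_prop

theorem differentiable_remainderIntegrand {l : ℝ} (hl : ‖lam / l‖ < 1) :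
    Differentiable ℂ (remainderIntegrand lam g · l) := by
  have hne : 1 - lam / l ≠ 0 := sub_ne_zero.2 fun h => by simp [← h] at hl
  unfold remainderIntegrand
  fun_prop (disch := exact Or.inl hne)

theorem norm_remainderIntegrand_le (hC : 0 < C) (hr0 : 0 ≤ r) (hr1 : r < 1) (hK : 0 ≤ K)
    (hlam : ‖lam‖ ≤ r * C) (hbound : ∀ l : ℝ, l ≤ -C → ‖g l‖ ≤ K / |l|) (s : ℂ) {l : ℝ}
    (hl : l ≤ -C) :
    ‖remainderIntegrand lam g s l‖ ≤
      K * (r / (1 - r) * C) * ‖s‖ * Real.exp (‖s‖ * (r / (1 - r))) * |l| ^ (-s.re - 2) := by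
  set ρ := r / (1 - r)
  have hl0 : 0 < |l| := abs_pos_of_neg (by linarith)
  have ht : C / |l| ≤ 1 := div_abs_le_one_of_le_neg hC hl
  have hw := norm_div_ofReal_lt_one hC hr0 hr1 hlam hl
  have hlog : ‖log (1 - lam / l)‖ ≤ ρ * (C / |l|) := calc
    ‖log (1 - lam / l)‖ ≤ ‖lam / l‖ / (1 - ‖lam / l‖) := norm_log_one_sub_le hw
    _ ≤ r * (C / |l|) / (1 - r) := by
        gcongr
        · exact norm_div_ofReal_le hlam l
        · exact (norm_div_ofReal_le hlam l).trans (mul_le_of_le_one_right hr0 ht)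
    _ = ρ * (C / |l|) := by ring
  have hpow : ‖(1 - lam / l) ^ (-s) - 1‖ ≤ ‖s‖ * (ρ * (C / |l|)) * Real.exp (‖s‖ * ρ) := by
    rw [cpow_def_of_ne_zero (sub_ne_zero.2 (fun h => by simp [← h] at hw))]
    refine (norm_exp_sub_one_le_mul_exp _).trans ?_
    rw [norm_mul, norm_neg, mul_comm ‖log _‖]
    gcongr
    exact hlog.trans (mul_le_of_le_one_right (by positivity) ht)
  have hexp : ‖exp (-s * (Real.log |l| : ℂ))‖ = |l| ^ (-s.re) := by
    rw [norm_exp, Real.rpow_def_of_pos hl0]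
    simp [mul_comm]
  calc ‖remainderIntegrand lam g s l‖
      = ‖exp (-s * (Real.log |l| : ℂ))‖ * ‖g l‖ * ‖(1 - lam / l) ^ (-s) - 1‖ := by
        rw [remainderIntegrand, norm_mul, norm_mul]
    _ ≤ |l| ^ (-s.re) * (K / |l|) * (‖s‖ * (ρ * (C / |l|)) * Real.exp (‖s‖ * ρ)) := by
        rw [hexp]; gcongr; exact hbound l hl
    _ = K * (ρ * C) * ‖s‖ * Real.exp (‖s‖ * ρ) * |l| ^ (-s.re - 2) := by
        rw [Real.rpow_sub hl0, Real.rpow_two]; field_simp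

theorem norm_remainderIntegrand_le_of_mem_ball (hC : 0 < C) (hr0 : 0 ≤ r) (hr1 : r < 1)
    (hK : 0 ≤ K) (hlam : ‖lam‖ ≤ r * C) (hbound : ∀ l : ℝ, l ≤ -C → ‖g l‖ ≤ K / |l|)
    {s₀ s : ℂ} {ε : ℝ} (hs : s ∈ ball s₀ ε) {l : ℝ} (hl : l ≤ -C) :
    ‖remainderIntegrand lam g s l‖ ≤
      K * (r / (1 - r) * C) * (‖s₀‖ + ε) * Real.exp ((‖s₀‖ + ε) * (r / (1 - r))) *
        (|l| ^ (-(‖s₀‖ + ε) - 2) + |l| ^ (ε - s₀.re - 2)) := by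
  have hsS : ‖s‖ ≤ ‖s₀‖ + ε := (norm_lt_of_mem_ball hs).le
  have hre : |s.re - s₀.re| < ε := by
    rw [← sub_re]; exact (abs_re_le_norm _).trans_lt (mem_ball_iff_norm.1 hs)
  have hε : 0 < ε := pos_of_mem_ball hs
  have hρ : 0 ≤ r / (1 - r) := div_nonneg hr0 (by linarith)
  refine (norm_remainderIntegrand_le hC hr0 hr1 hK hlam hbound s hl).trans ?_
  refine mul_le_mul (by gcongr) (Real.rpow_le_rpow_add_rpow (abs_pos_of_neg (by linarith)) ?_ ?_)
    (by positivity) (mul_nonneg (mul_nonneg (mul_nonneg hK (mul_nonneg hρ hC.le))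
      (by linarith [norm_nonneg s₀])) (Real.exp_nonneg _))
  · linarith [re_le_norm s]
  · linarith [(abs_lt.1 hre).1]

end Remainder

/-- The remainder term `R_C(s, λ̃)`: for `C > 0`, `0 ≤ r < 1`, `|λ̃| ≤ rC` and a measurable
`g : (−∞,−C] → ℂ` with `|g(λ)| ≤ K/|λ|`, the function
`F(s) = ∫_{−∞}^{−C} |λ|^{−s} g(λ) ((1 − λ̃/λ)^{−s} − 1) dλ` has absolutely integrable
integrand for `Re s > −1`, is holomorphic on `{Re s > −1}`, and vanishes at `s = 0`. -/
theorem remainder_RC_holomorphic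
    (C r K : ℝ) (hC : 0 < C) (hr0 : 0 ≤ r) (hr1 : r < 1) (hK : 0 ≤ K)
    (lam : ℂ) (hlam : ‖lam‖ ≤ r * C)
    (g : ℝ → ℂ) (hg : Measurable g)
    (hbound : ∀ l : ℝ, l ≤ -C → ‖g l‖ ≤ K / |l|) :
    (∀ s : ℂ, -1 < s.re →
      MeasureTheory.IntegrableOn
        (fun l : ℝ =>
          Complex.exp (-s * (Real.log |l| : ℂ)) * g l * ((1 - lam / (l : ℂ)) ^ (-s) - 1))
        (Set.Iic (-C))) ∧
    DifferentiableOn ℂ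
      (fun s : ℂ =>
        ∫ l in Set.Iic (-C),
          Complex.exp (-s * (Real.log |l| : ℂ)) * g l * ((1 - lam / (l : ℂ)) ^ (-s) - 1))
      {s : ℂ | -1 < s.re} ∧
    (∫ l in Set.Iic (-C),
        Complex.exp (-(0 : ℂ) * (Real.log |l| : ℂ)) * g l *
          ((1 - lam / (l : ℂ)) ^ (-(0 : ℂ)) - 1)) = 0 := by
  have hmeas (s : ℂ) :
      AEStronglyMeasurable (remainderIntegrand lam g s) (volume.restrict (Iic (-C))) :=
    (measurable_remainderIntegrand hg s).aestronglyMeasurable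
  have hae {P : ℝ → Prop} (h : ∀ l, l ≤ -C → P l) : ∀ᵐ l ∂volume.restrict (Iic (-C)), P l :=
    ae_restrict_of_forall_mem measurableSet_Iic h
  refine ⟨fun s hs => ?_, fun s₀ hs₀ => ?_, by simp⟩
  · exact ((integrableOn_Iic_abs_rpow hC (by linarith : -s.re - 2 < -1)).const_mul _).mono'
      (hmeas s) (hae fun l => norm_remainderIntegrand_le hC hr0 hr1 hK hlam hbound s)
  · replace hs₀ : -1 < s₀.re := hs₀
    set ε := (1 + s₀.re) / 2 with hε_def
    have hε : 0 < ε := by linarith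
    have hint := ((integrableOn_Iic_abs_rpow (p := -(‖s₀‖ + ε) - 2) hC
      (by linarith [norm_nonneg s₀])).add
      (integrableOn_Iic_abs_rpow (p := ε - s₀.re - 2) hC (by linarith))).const_mul
    refine (hasDerivAt_integral_of_dominated_of_differentiableOn hε hmeas
      (hae fun l hl => (differentiable_remainderIntegrand
        (norm_div_ofReal_lt_one hC hr0 hr1 hlam hl)).differentiableOn)
      (hae fun l hl s hs => norm_remainderIntegrand_le_of_mem_ball hC hr0 hr1 hK hlam hbound hs hl)
      (hint _)).differentiableAt.differentiableWithinAt
end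

section
/- Let R > 0, let d ∈ ℤ, and let f be holomorphic and nowhere vanishing on the punctured disc {z ∈ ℂ : 0 < |z| < R}. Suppose that the function z ↦ f'(z)/f(z) − d/z, defined on the punctured disc, extends to a holomorphic function on the full disc {|z| < R}. Then there exists a holomorphic function g on {|z| < R} with g(0) ≠ 0 such that f(z) = z^d · g(z) for all 0 < |z| < R; in particular the limit lim_{z→0} z^{−d}·f(z) exists and is nonzero. -/
/-!
Let `H` be a primitive of `h` on the disc. On the punctured disc the logarithmic derivative of
`z ^ (-d) * f z` is `f'/f - d/z = H'`, so, the punctured disc being connected,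
`z ^ (-d) * f z = c * exp (H z)` for a constant `c ≠ 0`; then `g = c * exp ∘ H` works.
-/

open Filter Metric Set Complex

theorem Complex.isPreconnected_ball_diff_center (c : ℂ) (r : ℝ) :
    IsPreconnected (ball c r \ {c}) := by
  rcases le_or_gt r 0 with hr | hr
  · simp [ball_eq_empty.2 hr, isPreconnected_empty]
  have : ball c r \ {c} = (fun z => c + exp z) '' {z | z.re < Real.log r} := by
    ext w
    constructor
    · rintro ⟨hw, hwc⟩
      have hw0 : w - c ≠ 0 := sub_ne_zero.2 hwc
      refine ⟨log (w - c), ?_, by simp [exp_log hw0]⟩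
      rw [mem_ofPred_eq, log_re]
      exact Real.log_lt_log (norm_pos_iff.2 hw0) (by rwa [mem_ball, dist_eq_norm] at hw)
    · rintro ⟨z, hz, rfl⟩
      refine ⟨?_, by simp [exp_ne_zero z]⟩
      rw [mem_ball, dist_eq_norm, add_sub_cancel_left, norm_exp]
      exact (Real.lt_log_iff_exp_lt hr).1 hz
  rw [this]
  exact ((convex_halfSpace_re_lt _).isPreconnected).image _ (by fun_prop)

theorem logDeriv_cexp_comp {H : ℂ → ℂ} {x : ℂ} (hH : DifferentiableAt ℂ H x) :
    logDeriv (fun z => exp (H z)) x = deriv H x := by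
  rw [show (fun z => exp (H z)) = exp ∘ H from rfl, logDeriv_comp (by fun_prop) hH,
    logDeriv_exp, Pi.one_apply, one_mul]

theorem logDeriv_zpow_mul {𝕜 : Type*} [NontriviallyNormedField 𝕜] {f : 𝕜 → 𝕜} {x : 𝕜}
    (hx : x ≠ 0) (hfx : f x ≠ 0) (hf : DifferentiableAt 𝕜 f x) (n : ℤ) :
    logDeriv (fun z => z ^ n * f z) x = n / x + logDeriv f x := by
  rw [logDeriv_mul (f := (· ^ n)) x (zpow_ne_zero n hx) hfx
    (differentiableAt_zpow.2 (.inl hx)) hf, logDeriv_zpow]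

theorem exists_eqOn_const_mul_cexp_of_logDeriv {s : Set ℂ} (hs : IsOpen s)
    (hs' : IsPreconnected s) {u H : ℂ → ℂ} (hu : DifferentiableOn ℂ u s)
    (hu0 : ∀ z ∈ s, u z ≠ 0) (hH : ∀ z ∈ s, HasDerivAt H (logDeriv u z) z) :
    ∃ c ≠ 0, EqOn u (fun z => c * exp (H z)) s := by
  have hexp : DifferentiableOn ℂ (fun z => exp (H z)) s :=
    fun z hz => (hH z hz).differentiableAt.cexp.differentiableWithinAt
  refine (logDeriv_eqOn_iff hu hexp hs hs' (fun z _ => exp_ne_zero _) hu0).1 fun z hz => ?_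
  rw [logDeriv_cexp_comp (hH z hz).differentiableAt, (hH z hz).deriv]

/-- If `f` is holomorphic and nowhere vanishing on the punctured disc `0 < |z| < R` and
`f'/f − d/z` extends holomorphically to the full disc, then `f(z) = z^d g(z)` for some
holomorphic `g` on the disc with `g(0) ≠ 0`; in particular `z^{−d} f(z)` has a nonzero
limit as `z → 0`. -/
theorem exists_factorization_zpow
    (R : ℝ) (hR : 0 < R) (d : ℤ) (f : ℂ → ℂ)
    (hf : DifferentiableOn ℂ f (Metric.ball (0 : ℂ) R \ {0}))
    (hf0 : ∀ z ∈ Metric.ball (0 : ℂ) R \ {0}, f z ≠ 0)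
    (hext : ∃ h : ℂ → ℂ, DifferentiableOn ℂ h (Metric.ball (0 : ℂ) R) ∧
      ∀ z ∈ Metric.ball (0 : ℂ) R \ {0}, h z = deriv f z / f z - (d : ℂ) / z) :
    ∃ g : ℂ → ℂ, DifferentiableOn ℂ g (Metric.ball (0 : ℂ) R) ∧ g 0 ≠ 0 ∧
      (∀ z ∈ Metric.ball (0 : ℂ) R \ {0}, f z = z ^ d * g z) ∧
      Tendsto (fun z : ℂ => z ^ (-d) * f z) (nhdsWithin 0 {(0 : ℂ)}ᶜ) (nhds (g 0)) := by
  obtain ⟨h, hh, hlog⟩ := hext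
  obtain ⟨H, hH⟩ := hh.isExactOn_ball
  have hS : IsOpen (ball (0 : ℂ) R \ {0}) := isOpen_ball.sdiff isClosed_singleton
  have hfS {z} (hz : z ∈ ball (0 : ℂ) R \ {0}) : DifferentiableAt ℂ f z :=
    hf.differentiableAt (hS.mem_nhds hz)
  have hu_diff : DifferentiableOn ℂ (fun z => z ^ (-d) * f z) (ball 0 R \ {0}) := fun z hz =>
    ((differentiableAt_zpow.2 (.inl hz.2)).mul (hfS hz)).differentiableWithinAt
  have hH_logDeriv : ∀ z ∈ ball (0 : ℂ) R \ {0},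
      HasDerivAt H (logDeriv (fun z => z ^ (-d) * f z) z) z := fun z hz =>
    (hH z hz.1).congr_deriv <| by
      rw [logDeriv_zpow_mul hz.2 (hf0 z hz) (hfS hz), logDeriv_apply, hlog z hz]
      push_cast
      ring
  obtain ⟨c, hc, hfc⟩ := exists_eqOn_const_mul_cexp_of_logDeriv hS
    (isPreconnected_ball_diff_center 0 R) hu_diff
    (fun z hz => mul_ne_zero (zpow_ne_zero _ hz.2) (hf0 z hz)) hH_logDeriv
  refine ⟨fun z => c * exp (H z), ?_, mul_ne_zero hc (exp_ne_zero _), fun z hz => ?_, ?_⟩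
  · exact fun z hz => ((hH z hz).differentiableAt.cexp.const_mul c).differentiableWithinAt
  · rw [← hfc hz, ← mul_assoc, ← zpow_add₀ hz.2, add_neg_cancel, zpow_zero, one_mul]
  · have hg : ContinuousAt (fun z => c * exp (H z)) 0 :=
      ((hH 0 (mem_ball_self hR)).differentiableAt.cexp.const_mul c).continuousAt
    refine (hg.tendsto.mono_left nhdsWithin_le_nhds).congr' ?_
    filter_upwards [sdiff_mem_nhdsWithin_compl (ball_mem_nhds 0 hR) {0}] with z hz
    exact (hfc hz).symm
end
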